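/- arXiv:0710.2245 — 5 statements merged into one kernel-verified Lean document; each statement's English description precedes it below -/
import Mathlib

section
/- Let p0 ∈ (0,1), p1 = 1 − p0, and let f0, f1 be probability densities on ℝ with mixture density f(z) = p0·f0(z) + p1·f1(z), fdr(z) = p0·f0(z)/f(z), F0(z) = ∫_{−∞}^z f0(t) dt, F(z) = ∫_{−∞}^z f(t) dt, and Fdr(z) = p0·F0(z)/F(z). Fix z ∈ ℝ with F(z) > 0 and f(t) > 0 for all t ≤ z. If fdr is monotone nondecreasing on the interval (−∞, z], then Fdr(z) ≤ fdr(z). -/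
open MeasureTheory

/-- If the local fdr is monotone nondecreasing on `(-∞, z]`, then the
tail-area false discovery rate satisfies `Fdr(z) ≤ fdr(z)`. -/
theorem tail_Fdr_le_local_fdr_of_monotone
    (p0 p1 : ℝ) (hp0 : p0 ∈ Set.Ioo (0:ℝ) 1) (hp1 : p1 = 1 - p0)
    (f0 f1 : ℝ → ℝ)
    (hf0nn : ∀ z, 0 ≤ f0 z) (hf1nn : ∀ z, 0 ≤ f1 z)
    (hf0meas : Measurable f0) (hf1meas : Measurable f1)
    (hf0int : Integrable f0) (hf1int : Integrable f1)
    (hf0one : ∫ z, f0 z = 1) (hf1one : ∫ z, f1 z = 1)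
    (f : ℝ → ℝ) (hf : ∀ z, f z = p0 * f0 z + p1 * f1 z)
    (fdr : ℝ → ℝ) (hfdr : ∀ z, fdr z = p0 * f0 z / f z)
    (F0 F Fdr : ℝ → ℝ)
    (hF0 : ∀ z, F0 z = ∫ t in Set.Iic z, f0 t)
    (hF : ∀ z, F z = ∫ t in Set.Iic z, f t)
    (hFdr : ∀ z, Fdr z = p0 * F0 z / F z)
    (z : ℝ) (hFz : 0 < F z)
    (hfpos : ∀ t, t ≤ z → 0 < f t)
    (hmono : MonotoneOn fdr (Set.Iic z)) :
    Fdr z ≤ fdr z := by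
  have hfint : Integrable f := by
    have : Integrable (fun t => p0 * f0 t + p1 * f1 t) :=
      ((hf0int.const_mul p0).add (hf1int.const_mul p1))
    exact this.congr (by filter_upwards with t using (hf t).symm)
  have key : p0 * F0 z ≤ fdr z * F z := by
    rw [hF0, hF, ← integral_const_mul, ← integral_const_mul]
    apply setIntegral_mono_on
    · exact (hf0int.const_mul p0).integrableOn
    · exact (hfint.const_mul (fdr z)).integrableOn
    · exact measurableSet_Iic
    · intro t ht
      have hft := hfpos t ht
      have h1 : p0 * f0 t = fdr t * f t := by
        rw [hfdr t]; field_simp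
      rw [h1]
      exact mul_le_mul_of_nonneg_right (hmono ht (Set.mem_Iic.2 le_rfl) ht) hft.le
  rw [hFdr, div_le_iff₀ hFz]
  exact key
end

section
/- Let p0 ∈ (0,1), p1 = 1 − p0, let F0 : ℝ → (0,1) be a differentiable cumulative distribution function with derivative f0(z) > 0, and let 0 < α < 1. Define the Lehmann alternative F1(z) = F0(z)^α with density f1(z) = α·F0(z)^{α−1}·f0(z). With fdr(z) = p0·f0(z)/(p0·f0(z) + p1·f1(z)) and Fdr(z) = p0·F0(z)/(p0·F0(z) + p1·F1(z)), one has for every z ∈ ℝ: log(fdr(z)/(1 − fdr(z))) = log(Fdr(z)/(1 − Fdr(z))) + log(1/α). -/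
/-!
Both false discovery rates are of the form `a / (a + b)`, whose odds are simply `a / b`. For a
Lehmann alternative, `f1 = α F0^(α-1) f0 = α (F1 / F0) f0`, so the local odds
`p0 f0 / (p1 f1)` are the tail-area odds `p0 F0 / (p1 F1)` divided by `α`; taking logarithms
gives the claim.
-/

noncomputable def odds (p : ℝ) : ℝ := p / (1 - p)

theorem odds_div_add {a b : ℝ} (h : a + b ≠ 0) : odds (a / (a + b)) = a / b := by
  rcases eq_or_ne b 0 with rfl | hb
  · simp [odds, div_self (by simpa using h)]
  · rw [odds, one_sub_div h, add_sub_cancel_left, div_div_div_cancel_right₀ h]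

theorem div_mul_lehmann_density {c d x y α : ℝ} (hx : 0 < x) (hy : y ≠ 0) :
    c * y / (d * (α * x ^ (α - 1) * y)) = c * x / (d * x ^ α) * (1 / α) := by
  rw [Real.rpow_sub_one hx.ne']
  have : x ^ α ≠ 0 := (Real.rpow_pos_of_pos hx α).ne'
  field_simp

theorem lehmann_alternative_log_odds_relation_general
    (p0 p1 : ℝ) (hp0 : p0 ∈ Set.Ioo (0:ℝ) 1) (hp1 : p1 = 1 - p0)
    (F0 f0 : ℝ → ℝ)
    (hF0range : ∀ z, F0 z ∈ Set.Ioo (0:ℝ) 1)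
    (hf0pos : ∀ z, 0 < f0 z)
    (α : ℝ) (hα : 0 < α)
    (F1 f1 : ℝ → ℝ)
    (hF1 : ∀ z, F1 z = F0 z ^ α)
    (hf1 : ∀ z, f1 z = α * F0 z ^ (α - 1) * f0 z)
    (fdr Fdr : ℝ → ℝ)
    (hfdr : ∀ z, fdr z = p0 * f0 z / (p0 * f0 z + p1 * f1 z))
    (hFdr : ∀ z, Fdr z = p0 * F0 z / (p0 * F0 z + p1 * F1 z)) :
    ∀ z : ℝ, Real.log (fdr z / (1 - fdr z))
      = Real.log (Fdr z / (1 - Fdr z)) + Real.log (1 / α) := by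
  intro z
  have hp0pos : 0 < p0 := hp0.1
  have hp1pos : 0 < p1 := by linarith [hp0.2]
  have hF0pos : 0 < F0 z := (hF0range z).1
  have hF1pos : 0 < F1 z := hF1 z ▸ Real.rpow_pos_of_pos hF0pos α
  have hf0 : 0 < f0 z := hf0pos z
  have hf1pos : 0 < f1 z := by rw [hf1]; positivity
  have htail : odds (Fdr z) = p0 * F0 z / (p1 * F1 z) := by
    rw [hFdr, odds_div_add (by positivity)]
  have hlocal : odds (fdr z) = p0 * F0 z / (p1 * F1 z) * (1 / α) := by
    rw [hfdr, odds_div_add (by positivity), hf1, hF1,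
      div_mul_lehmann_density hF0pos hf0.ne']
  change Real.log (odds (fdr z)) = Real.log (odds (Fdr z)) + Real.log (1 / α)
  rw [hlocal, htail, Real.log_mul (by positivity) (by positivity)]

/-- For Lehmann alternatives `F1 = F0^α` (0 < α < 1),
`log(fdr/(1-fdr)) = log(Fdr/(1-Fdr)) + log(1/α)`. -/
theorem lehmann_alternative_log_odds_relation
    (p0 p1 : ℝ) (hp0 : p0 ∈ Set.Ioo (0:ℝ) 1) (hp1 : p1 = 1 - p0)
    (F0 f0 : ℝ → ℝ)
    (hF0range : ∀ z, F0 z ∈ Set.Ioo (0:ℝ) 1)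
    (hF0deriv : ∀ z, HasDerivAt F0 (f0 z) z)
    (hf0pos : ∀ z, 0 < f0 z)
    (α : ℝ) (hα : 0 < α) (hα1 : α < 1)
    (F1 f1 : ℝ → ℝ)
    (hF1 : ∀ z, F1 z = F0 z ^ α)
    (hf1 : ∀ z, f1 z = α * F0 z ^ (α - 1) * f0 z)
    (fdr Fdr : ℝ → ℝ)
    (hfdr : ∀ z, fdr z = p0 * f0 z / (p0 * f0 z + p1 * f1 z))
    (hFdr : ∀ z, Fdr z = p0 * F0 z / (p0 * F0 z + p1 * F1 z)) :
    ∀ z : ℝ, Real.log (fdr z / (1 - fdr z))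
      = Real.log (Fdr z / (1 - Fdr z)) + Real.log (1 / α) :=
  lehmann_alternative_log_odds_relation_general p0 p1 hp0 hp1 F0 f0 hF0range hf0pos α hα F1 f1 hF1
    hf1 fdr Fdr hfdr hFdr
end

section
/- Let K, K0, m, m0 be positive integers with a selection of K0 of the K indices given by a K0×K row-selection matrix R (each row of R is a distinct standard basis vector of ℝ^K). Let X be a real K×m matrix and X0 a real K×m0 matrix, and suppose there exist e ∈ ℝ^m and e0 ∈ ℝ^{m0} with X·e = 1_K and X0·e0 = 1_K (both have the constant vector of ones in their column spaces). Set X̃ = R·X, X̃0 = R·X0, and assume G̃0 = X̃0ᵀ·X̃0 is invertible. Let v ∈ ℝ^K and assume G = Xᵀ·diag(v)·X is invertible. Then the matrix A = X0·G̃0⁻¹·X̃0ᵀ·X̃ − X satisfies A·G⁻¹·Xᵀ·v = 0; that is, the influence matrix M = A·G⁻¹·Xᵀ annihilates the expected-count vector v. -/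
open Matrix

/-- In the central matching error analysis, the influence matrix
`M = A·G⁻¹·Xᵀ` with `A = X0·G̃0⁻¹·X̃0ᵀ·X̃ − X` annihilates the expected-count
vector `v`, provided both structure matrices contain the constant vector of ones
in their column spaces. -/
theorem influence_matrix_annihilates_counts
    (K K0 m m0 : ℕ) (hK : 0 < K) (hK0 : 0 < K0) (hm : 0 < m) (hm0 : 0 < m0)
    (ι : Fin K0 → Fin K) (hι : Function.Injective ι)
    (R : Matrix (Fin K0) (Fin K) ℝ)
    (hR : ∀ r c, R r c = if ι r = c then 1 else 0)
    (X : Matrix (Fin K) (Fin m) ℝ) (X0 : Matrix (Fin K) (Fin m0) ℝ)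
    (e : Fin m → ℝ) (he : X.mulVec e = fun _ => 1)
    (e0 : Fin m0 → ℝ) (he0 : X0.mulVec e0 = fun _ => 1)
    (Xt : Matrix (Fin K0) (Fin m) ℝ) (hXt : Xt = R * X)
    (X0t : Matrix (Fin K0) (Fin m0) ℝ) (hX0t : X0t = R * X0)
    (G0t : Matrix (Fin m0) (Fin m0) ℝ) (hG0t : G0t = X0tᵀ * X0t)
    (hG0tinv : IsUnit G0t.det)
    (v : Fin K → ℝ)
    (G : Matrix (Fin m) (Fin m) ℝ)
    (hG : G = Xᵀ * Matrix.diagonal v * X)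
    (hGinv : IsUnit G.det)
    (A : Matrix (Fin K) (Fin m) ℝ)
    (hA : A = X0 * G0t⁻¹ * X0tᵀ * Xt - X) :
    (A * G⁻¹ * Xᵀ).mulVec v = 0 := by
  -- Step 1: Xᵀ v = G e
  have hXe : X.mulVec e = fun _ => 1 := he
  have hdiag : (Matrix.diagonal v).mulVec (fun _ => (1:ℝ)) = v := by
    funext i
    simp [Matrix.mulVec_diagonal]
  have h1 : G.mulVec e = Xᵀ.mulVec v := by
    rw [hG, ← Matrix.mulVec_mulVec, ← Matrix.mulVec_mulVec, hXe, hdiag]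
  -- Step 2: G⁻¹ Xᵀ v = e
  have h2 : G⁻¹.mulVec (Xᵀ.mulVec v) = e := by
    rw [← h1, Matrix.mulVec_mulVec, Matrix.nonsing_inv_mul G hGinv, Matrix.one_mulVec]
  -- Step 3: Xt e = X0t e0 (both are the all-ones vector on Fin K0)
  have hXte : Xt.mulVec e = fun _ => 1 := by
    rw [hXt, ← Matrix.mulVec_mulVec, hXe]
    funext r
    simp [Matrix.mulVec, dotProduct, hR]
  have hX0te : X0t.mulVec e0 = fun _ => 1 := by
    rw [hX0t, ← Matrix.mulVec_mulVec, he0]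
    funext r
    simp [Matrix.mulVec, dotProduct, hR]
  -- Step 4: A e = 0
  have hAe : A.mulVec e = 0 := by
    rw [hA, Matrix.sub_mulVec, ← Matrix.mulVec_mulVec, hXte, ← hX0te,
      Matrix.mulVec_mulVec, Matrix.mul_assoc (X0 * G0t⁻¹) X0tᵀ X0t, ← hG0t,
      Matrix.mul_assoc X0 G0t⁻¹ G0t, Matrix.nonsing_inv_mul G0t hG0tinv,
      Matrix.mul_one, he0, hXe]
    simp
  calc (A * G⁻¹ * Xᵀ).mulVec v
      = A.mulVec (G⁻¹.mulVec (Xᵀ.mulVec v)) := by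
        rw [Matrix.mulVec_mulVec, Matrix.mulVec_mulVec]
    _ = 0 := by rw [h2, hAe]
end

section
/- Let K, m be positive integers, X a real K×m matrix, and y ∈ ℝ^K. Suppose β : ℝ^K → ℝ^m is differentiable at y and satisfies the Poisson maximum-likelihood normal equations Xᵀ·(u − exp(X·β(u))) = 0 for all u in a neighborhood of y, where exp is applied componentwise. If G = Xᵀ·diag(exp(X·β(y)))·X is invertible, then the fitted log-density map u ↦ X·β(u) has Fréchet derivative at y equal to the linear map h ↦ X·G⁻¹·Xᵀ·h; that is, dℓ̂/dy = X·Ĝ⁻¹·Xᵀ. -/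
open Matrix

/-!
Differentiating the normal equations `Xᵀ (u - ν(β u)) = 0` at `y` gives
`Xᵀ h = Xᵀ diag(ν̂) X · dβ(h) = Ĝ · dβ(h)`, so `dβ = Ĝ⁻¹ Xᵀ` once `Ĝ` is invertible,
and the chain rule gives `dℓ̂ = X Ĝ⁻¹ Xᵀ`.
-/

section PoissonRegression

variable {ι κ : Type*} [Fintype ι] [Fintype κ]

/-- The Poisson means `ν(β)` of the paper. -/
noncomputable def poissonMean (X : Matrix ι κ ℝ) (b : κ → ℝ) : ι → ℝ :=
  fun k => Real.exp ((X *ᵥ b) k)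

noncomputable def fisherInfo [DecidableEq ι] (X : Matrix ι κ ℝ) (b : κ → ℝ) : Matrix κ κ ℝ :=
  Xᵀ * diagonal (poissonMean X b) * X

theorem hasFDerivAt_poissonMean [DecidableEq ι] (X : Matrix ι κ ℝ) (b : κ → ℝ) :
    HasFDerivAt (poissonMean X)
      (diagonal (poissonMean X b) * X).mulVecLin.toContinuousLinearMap b := by
  rw [hasFDerivAt_pi']
  intro k
  have hcoord := ((ContinuousLinearMap.proj k).comp
    X.mulVecLin.toContinuousLinearMap).hasFDerivAt (x := b) |>.exp
  refine hcoord.congr_fderiv ?_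
  ext h
  simp only [ContinuousLinearMap.comp_apply, FunLike.coe_smul, Pi.smul_apply,
    ContinuousLinearMap.proj_apply, LinearMap.coe_toContinuousLinearMap', mulVecLin_apply,
    smul_eq_mul, ← mulVec_mulVec, mulVec_diagonal, poissonMean]

theorem fisherInfo_mulVec_fderiv_eq [DecidableEq ι] (X : Matrix ι κ ℝ)
    {β : (ι → ℝ) → κ → ℝ} {B : (ι → ℝ) →L[ℝ] κ → ℝ} {y : ι → ℝ} (hB : HasFDerivAt β B y)
    (hnormal : ∀ᶠ u in nhds y, Xᵀ *ᵥ (u - poissonMean X (β u)) = 0) (h : ι → ℝ) :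
    fisherInfo X (β y) *ᵥ B h = Xᵀ *ᵥ h := by
  have hderiv := Xᵀ.mulVecLin.toContinuousLinearMap.hasFDerivAt.comp y
    ((hasFDerivAt_id y).sub ((hasFDerivAt_poissonMean X (β y)).comp y hB))
  have hzero := (hasFDerivAt_const (𝕜 := ℝ) (0 : κ → ℝ) y).congr_of_eventuallyEq hnormal
  have hh := DFunLike.congr_fun (hderiv.unique hzero) h
  simp only [ContinuousLinearMap.comp_apply, FunLike.coe_sub, Pi.sub_apply,
    ContinuousLinearMap.id_apply, LinearMap.coe_toContinuousLinearMap', mulVecLin_apply,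
    FunLike.coe_zero, Pi.zero_apply, mulVec_sub, sub_eq_zero] at hh
  rw [hh, fisherInfo, mulVec_mulVec, Matrix.mul_assoc]

end PoissonRegression

theorem lindsey_fitted_log_density_derivative_general
    (K m : ℕ)
    (X : Matrix (Fin K) (Fin m) ℝ)
    (y : Fin K → ℝ)
    (β : (Fin K → ℝ) → (Fin m → ℝ))
    (hβdiff : DifferentiableAt ℝ β y)
    (hnormal : ∀ᶠ u in nhds y,
      Xᵀ.mulVec (u - fun k => Real.exp (X.mulVec (β u) k)) = 0)
    (G : Matrix (Fin m) (Fin m) ℝ)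
    (hG : G = Xᵀ * Matrix.diagonal (fun k => Real.exp (X.mulVec (β y) k)) * X)
    (hGinv : IsUnit G.det) :
    HasFDerivAt (fun u => X.mulVec (β u))
      (LinearMap.toContinuousLinearMap ((X * G⁻¹ * Xᵀ).mulVecLin)) y := by
  obtain ⟨B, hB⟩ : ∃ B, HasFDerivAt β B y := ⟨_, hβdiff.hasFDerivAt⟩
  have hGB (h : Fin K → ℝ) : G *ᵥ B h = Xᵀ *ᵥ h := by
    rw [hG]
    exact fisherInfo_mulVec_fderiv_eq X hB hnormal h
  have hB_eq (h : Fin K → ℝ) : B h = G⁻¹ *ᵥ (Xᵀ *ᵥ h) := by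
    rw [← hGB, mulVec_mulVec, nonsing_inv_mul G hGinv, one_mulVec]
  refine (X.mulVecLin.toContinuousLinearMap.hasFDerivAt.comp y hB).congr_fderiv ?_
  ext1 h
  simp only [ContinuousLinearMap.comp_apply, LinearMap.coe_toContinuousLinearMap',
    mulVecLin_apply, hB_eq, mulVec_mulVec, Matrix.mul_assoc]

/-- In Lindsey's method, if the Poisson maximum-likelihood map `β`
satisfies the normal equations `Xᵀ·(u − exp(X·β(u))) = 0` near `y` and is
differentiable at `y`, then the fitted log-density map `u ↦ X·β(u)` has Fréchet
derivative `h ↦ X·G⁻¹·Xᵀ·h`, where `G = Xᵀ·diag(exp(X·β(y)))·X`. -/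
theorem lindsey_fitted_log_density_derivative
    (K m : ℕ) (hK : 0 < K) (hm : 0 < m)
    (X : Matrix (Fin K) (Fin m) ℝ)
    (y : Fin K → ℝ)
    (β : (Fin K → ℝ) → (Fin m → ℝ))
    (hβdiff : DifferentiableAt ℝ β y)
    (hnormal : ∀ᶠ u in nhds y,
      Xᵀ.mulVec (u - fun k => Real.exp (X.mulVec (β u) k)) = 0)
    (G : Matrix (Fin m) (Fin m) ℝ)
    (hG : G = Xᵀ * Matrix.diagonal (fun k => Real.exp (X.mulVec (β y) k)) * X)
    (hGinv : IsUnit G.det) :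
    HasFDerivAt (fun u => X.mulVec (β u))
      (LinearMap.toContinuousLinearMap ((X * G⁻¹ * Xᵀ).mulVecLin)) y :=
  lindsey_fitted_log_density_derivative_general K m X y β hβdiff hnormal G hG hGinv
end

section
/- (Lemma 1.) Let K, K0, m, m0 be positive integers, R a K0×K row-selection matrix (each row a distinct standard basis vector of ℝ^K), X a real K×m matrix, X0 a real K×m0 matrix, X̃ = R·X, X̃0 = R·X0, and assume G̃0 = X̃0ᵀ·X̃0 is invertible. Let y ∈ ℝ^K and suppose β : ℝ^K → ℝ^m is differentiable at y with Xᵀ·(u − exp(X·β(u))) = 0 for all u in a neighborhood of y (exp componentwise), and that G = Xᵀ·diag(exp(X·β(y)))·X is invertible. Define ℓ(u) = X·β(u), the fitted null vector ℓ0⁺(u) = X0·G̃0⁻¹·X̃0ᵀ·R·ℓ(u) (the least-squares fit of X0-columns to the restriction of ℓ), and ℓfdr(u) = ℓ0⁺(u) − ℓ(u). Then ℓfdr is differentiable at y with Fréchet derivative the linear map h ↦ A·G⁻¹·Xᵀ·h, where A = X0·G̃0⁻¹·X̃0ᵀ·X̃ − X. -/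
open Matrix

/-- Lemma 1: the influence function of the vector of log local false
discovery rates `ℓfdr(u) = ℓ0⁺(u) − ℓ(u)` with respect to the counts `y` is
`h ↦ A·G⁻¹·Xᵀ·h`, where `ℓ(u) = X·β(u)` is the Poisson-regression fit,
`ℓ0⁺(u) = X0·G̃0⁻¹·X̃0ᵀ·R·ℓ(u)` is the least-squares null fit over the central
bins, and `A = X0·G̃0⁻¹·X̃0ᵀ·X̃ − X`. -/
theorem lemma1_influence_function_of_log_fdr
    (K K0 m m0 : ℕ) (hK : 0 < K) (hK0 : 0 < K0) (hm : 0 < m) (hm0 : 0 < m0)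
    (ι : Fin K0 → Fin K) (hι : Function.Injective ι)
    (R : Matrix (Fin K0) (Fin K) ℝ)
    (hR : ∀ r c, R r c = if ι r = c then 1 else 0)
    (X : Matrix (Fin K) (Fin m) ℝ) (X0 : Matrix (Fin K) (Fin m0) ℝ)
    (Xt : Matrix (Fin K0) (Fin m) ℝ) (hXt : Xt = R * X)
    (X0t : Matrix (Fin K0) (Fin m0) ℝ) (hX0t : X0t = R * X0)
    (G0t : Matrix (Fin m0) (Fin m0) ℝ) (hG0t : G0t = X0tᵀ * X0t)
    (hG0tinv : IsUnit G0t.det)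
    (y : Fin K → ℝ)
    (β : (Fin K → ℝ) → (Fin m → ℝ))
    (hβdiff : DifferentiableAt ℝ β y)
    (hnormal : ∀ᶠ u in nhds y,
      Xᵀ.mulVec (u - fun k => Real.exp (X.mulVec (β u) k)) = 0)
    (G : Matrix (Fin m) (Fin m) ℝ)
    (hG : G = Xᵀ * Matrix.diagonal (fun k => Real.exp (X.mulVec (β y) k)) * X)
    (hGinv : IsUnit G.det)
    (ℓ ℓ0 ℓfdr : (Fin K → ℝ) → (Fin K → ℝ))
    (hℓ : ∀ u, ℓ u = X.mulVec (β u))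
    (hℓ0 : ∀ u, ℓ0 u = (X0 * G0t⁻¹ * X0tᵀ * R).mulVec (ℓ u))
    (hℓfdr : ∀ u, ℓfdr u = ℓ0 u - ℓ u)
    (A : Matrix (Fin K) (Fin m) ℝ)
    (hA : A = X0 * G0t⁻¹ * X0tᵀ * Xt - X) :
    HasFDerivAt ℓfdr
      (LinearMap.toContinuousLinearMap ((A * G⁻¹ * Xᵀ).mulVecLin)) y := by
  classical
  set D := fderiv ℝ β y with hD
  have hβ' : HasFDerivAt β D y := hβdiff.hasFDerivAt
  set e : Fin K → ℝ := fun k => Real.exp (X.mulVec (β y) k) with he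
  set MX : (Fin m → ℝ) →L[ℝ] (Fin K → ℝ) := LinearMap.toContinuousLinearMap X.mulVecLin
    with hMX
  have hXlin : HasFDerivAt (fun u : Fin K → ℝ => X.mulVec (β u)) (MX.comp D) y :=
    MX.hasFDerivAt.comp y hβ'
  set Lexp : (Fin K → ℝ) →L[ℝ] (Fin K → ℝ) := ContinuousLinearMap.pi
    (fun k => e k • ((ContinuousLinearMap.proj k).comp (MX.comp D))) with hLexp
  have hexp : HasFDerivAt (fun u : Fin K → ℝ => fun k => Real.exp (X.mulVec (β u) k))
      Lexp y := by
    apply hasFDerivAt_pi''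
    intro k
    have hk : HasFDerivAt (fun u : Fin K → ℝ => X.mulVec (β u) k)
        ((ContinuousLinearMap.proj k).comp (MX.comp D)) y :=
      hasFDerivAt_pi'.1 hXlin k
    exact hk.exp
  set MXt : (Fin K → ℝ) →L[ℝ] (Fin m → ℝ) := LinearMap.toContinuousLinearMap Xᵀ.mulVecLin
    with hMXt
  have hg : HasFDerivAt
      (fun u : Fin K → ℝ => Xᵀ.mulVec (fun k => Real.exp (X.mulVec (β u) k)))
      (MXt.comp Lexp) y := MXt.hasFDerivAt.comp y hexp
  have hg2 : HasFDerivAt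
      (fun u : Fin K → ℝ => Xᵀ.mulVec (fun k => Real.exp (X.mulVec (β u) k)))
      MXt y := by
    apply MXt.hasFDerivAt.congr_of_eventuallyEq
    filter_upwards [hnormal] with u hu
    have h1 : Xᵀ.mulVec u - Xᵀ.mulVec (fun k => Real.exp (X.mulVec (β u) k)) = 0 := by
      rw [← Matrix.mulVec_sub]; exact hu
    have h2 : Xᵀ.mulVec (fun k => Real.exp (X.mulVec (β u) k)) = Xᵀ.mulVec u := by
      have := sub_eq_zero.mp h1
      exact this.symm
    exact h2
  have huniq : MXt.comp Lexp = MXt := hg.unique hg2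
  have hDh : ∀ h : Fin K → ℝ, D h = (G⁻¹ * Xᵀ).mulVec h := by
    intro h
    have h1 : G.mulVec (D h) = Xᵀ.mulVec h := by
      have := congrFun (congrArg (fun (T : (Fin K → ℝ) →L[ℝ] (Fin m → ℝ)) => T.toFun) huniq) h
      have heval : Xᵀ.mulVec (fun k => e k * (X.mulVec (D h)) k) = Xᵀ.mulVec h := this
      have hdiag : (Matrix.diagonal e).mulVec (X.mulVec (D h))
          = fun k => e k * (X.mulVec (D h)) k := by
        ext k; rw [Matrix.mulVec_diagonal]
      rw [hG]
      calc (Xᵀ * Matrix.diagonal (fun k => Real.exp (X.mulVec (β y) k)) * X).mulVec (D h)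
          = (Xᵀ * Matrix.diagonal e).mulVec (X.mulVec (D h)) :=
            (Matrix.mulVec_mulVec _ _ _).symm
        _ = Xᵀ.mulVec ((Matrix.diagonal e).mulVec (X.mulVec (D h))) :=
            (Matrix.mulVec_mulVec _ _ _).symm
        _ = Xᵀ.mulVec (fun k => e k * (X.mulVec (D h)) k) := by rw [hdiag]
        _ = Xᵀ.mulVec h := heval
    calc D h = (G⁻¹ * G).mulVec (D h) := by
            rw [Matrix.nonsing_inv_mul _ hGinv, Matrix.one_mulVec]
      _ = G⁻¹.mulVec (G.mulVec (D h)) := by rw [← Matrix.mulVec_mulVec]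
      _ = (G⁻¹ * Xᵀ).mulVec h := by rw [h1, Matrix.mulVec_mulVec]
  have hℓf : ℓfdr = fun u => A.mulVec (β u) := by


    funext u
    rw [hℓfdr, hℓ0, hℓ, hA, hXt]
    rw [Matrix.mulVec_mulVec, Matrix.sub_mulVec]
    congr 2
    rw [Matrix.mul_assoc (X0 * G0t⁻¹ * X0tᵀ) R X]
  have final : HasFDerivAt ℓfdr
      ((LinearMap.toContinuousLinearMap A.mulVecLin).comp D) y := by
    rw [hℓf]
    exact (LinearMap.toContinuousLinearMap A.mulVecLin).hasFDerivAt.comp y hβ'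
  convert final using 1
  ext h
  simp only [ContinuousLinearMap.coe_comp', Function.comp_apply,
    LinearMap.coe_toContinuousLinearMap', Matrix.mulVecLin_apply]
  rw [hDh h, Matrix.mul_assoc A G⁻¹ Xᵀ, ← Matrix.mulVec_mulVec]
end
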